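/- arXiv:1707.01028 — 2 statements merged into one kernel-verified Lean document; each statement's English description precedes it below -/
import Mathlib

section
/- Under the age-indexed Markov renewal hypothesis, the age-indexed semi-Markov transition probability function with initial and final backward satisfies, for all states i,j in E and all natural numbers u ≤ s, u', t with s ≤ t (and whenever the conditioning events have positive probability), the recursive system of equations: ᵃ⁺ˢ⁻ᵘφ_{ij}(u,s;u',t) = 1_{\{i=j\}} · 1_{\{u' = t−s+u\}} · ᵃ⁺ˢ⁻ᵘH̄_i(s−u;t) / ᵃ⁺ˢ⁻ᵘH̄_i(s−u;s) + Σ_{k∈E} Σ_{θ=s+1}^{t−u'} ( ᵃ⁺ˢ⁻ᵘq_{ik}(s−u;θ) / ᵃ⁺ˢ⁻ᵘH̄_i(s−u;s) ) · ᵃ⁺θφ_{kj}(0,θ;u',t). -/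
/-!
Every event is decomposed along the full history `(J h, T h)_{h ≤ m}` up to the last transition.
On the cylinder of such a history, the Markov renewal property gives the law of the next
transition through the kernel taken at the age and time of the last transition. By first-step
analysis, `ℙ[Z t = j, B t = u' | history]` therefore depends only on the last state and time,
through an explicit recursion over the next transition. It agrees with the restarted
`φ_{kj}(0,θ;u',t)` whenever the conditioning event of the latter is not null; otherwise the
kernel increment in front of it vanishes. Summing over the histories that make up
`{Z s = i, B s = u}`, numerator and denominator of `φ_{ij}(u,s;u',t)` factor through the same
total mass, which cancels.
-/

open MeasureTheory Finset Function

namespace AgeIndexedSemiMarkov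

theorem findGreatest_le_eq_of_strictMono {f : ℕ → ℕ} (hf : StrictMono f) {m r : ℕ}
    (hm : f m ≤ r) (hr : r < f (m + 1)) : Nat.findGreatest (fun n => f n ≤ r) r = m := by
  refine Nat.findGreatest_eq_iff.2 ⟨hf.le_apply.trans hm, fun _ => hm, fun n hmn _ hn => ?_⟩
  have := hf.monotone (show m + 1 ≤ n by omega)
  omega

theorem findGreatest_le_mem_Ico {f : ℕ → ℕ} (hf : StrictMono f) (h0 : f 0 = 0) (r : ℕ) :
    f (Nat.findGreatest (fun n => f n ≤ r) r) ≤ r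
      ∧ r < f (Nat.findGreatest (fun n => f n ≤ r) r + 1) := by
  refine ⟨Nat.findGreatest_spec (P := fun n => f n ≤ r) (Nat.zero_le r) (by simp [h0]), ?_⟩
  by_contra! h
  have := Nat.le_findGreatest (P := fun n => f n ≤ r) (hf.le_apply.trans h) h
  omega

theorem measureReal_iUnion_of_pairwise {Ω ι : Type*} [MeasurableSpace Ω] {μ : Measure Ω}
    [IsFiniteMeasure μ] [Countable ι] {f : ι → Set Ω} (hd : Pairwise (Disjoint on f))
    (hm : ∀ i, MeasurableSet (f i)) : μ.real (⋃ i, f i) = ∑' i, μ.real (f i) := by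
  simp only [measureReal_def, measure_iUnion hd hm,
    ENNReal.tsum_toReal_eq fun _ => measure_ne_top μ _]

/-- `⟨m, states, times⟩` records the values of `(J h, T h)` for `h ≤ m`. -/
abbrev History (E : Type*) := Σ m : ℕ, (Fin (m + 1) → E) × (Fin (m + 1) → ℕ)

namespace History

variable {E : Type*}

def lastState (v : History E) : E := v.2.1 (Fin.last v.1)

def lastTime (v : History E) : ℕ := v.2.2 (Fin.last v.1)

def snoc (v : History E) (k : E) (θ : ℕ) : History E :=
  ⟨v.1 + 1, Fin.snoc v.2.1 k, Fin.snoc v.2.2 θ⟩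

@[simp] theorem lastState_snoc (v : History E) (k : E) (θ : ℕ) : (v.snoc k θ).lastState = k :=
  Fin.snoc_last (α := fun _ => E) _ _

@[simp] theorem lastTime_snoc (v : History E) (k : E) (θ : ℕ) : (v.snoc k θ).lastTime = θ :=
  Fin.snoc_last (α := fun _ => ℕ) _ _

end History

open History

variable {Ω E : Type*} {J : ℕ → Ω → E} {T : ℕ → Ω → ℕ}

def cylinder (J : ℕ → Ω → E) (T : ℕ → Ω → ℕ) (v : History E) : Set Ω :=
  {ω | ∀ h : Fin (v.1 + 1), J h ω = v.2.1 h ∧ T h ω = v.2.2 h}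

/-- The history `v` is still the current one at time `r` (when `v.lastTime ≤ r`). -/
def cylinderAt (J : ℕ → Ω → E) (T : ℕ → Ω → ℕ) (v : History E) (r : ℕ) : Set Ω :=
  cylinder J T v ∩ {ω | r < T (v.1 + 1) ω}

theorem last_of_mem_cylinder {v : History E} {ω : Ω} (hω : ω ∈ cylinder J T v) :
    J v.1 ω = v.lastState ∧ T v.1 ω = v.lastTime :=
  hω (Fin.last v.1)

theorem cylinder_snoc (v : History E) (k : E) (θ : ℕ) :
    cylinder J T (v.snoc k θ)
      = cylinder J T v ∩ {ω | J (v.1 + 1) ω = k ∧ T (v.1 + 1) ω = θ} := by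
  ext ω
  simp [cylinder, snoc, Fin.forall_fin_succ']

theorem measurableSet_cylinder [MeasurableSpace Ω] [MeasurableSpace E] [MeasurableSingletonClass E]
    (hJ : ∀ n, Measurable (J n)) (hT : ∀ n, Measurable (T n)) (v : History E) :
    MeasurableSet (cylinder J T v) := by
  simp only [cylinder, Set.ofPred_forall]
  exact .iInter fun h => (hJ h (measurableSet_singleton _)).inter (hT h (measurableSet_singleton _))

theorem cylinderAt_lastTime (hTmono : ∀ ω, StrictMono fun n => T n ω) (v : History E) :
    cylinderAt J T v v.lastTime = cylinder J T v := by
  refine Set.inter_eq_left.2 fun ω hω => ?_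
  rw [Set.mem_ofPred_eq, ← (last_of_mem_cylinder hω).2]
  exact hTmono ω (Nat.lt_succ_self _)

theorem pairwise_disjoint_cylinder_snoc (v : History E) :
    Pairwise (Disjoint on fun p : ℕ × E => cylinder J T (v.snoc p.2 p.1)) := by
  intro p p' hne
  refine Set.disjoint_left.2 fun ω hω hω' => hne ?_
  simp only [cylinder_snoc] at hω hω'
  exact Prod.ext (hω.2.2.symm.trans hω'.2.2) (hω.2.1.symm.trans hω'.2.1)

theorem cylinderAt_inter_le_eq_biUnion [Fintype E] (v : History E) (s t : ℕ) :
    cylinderAt J T v s ∩ {ω | T (v.1 + 1) ω ≤ t}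
      = ⋃ p ∈ Ioc s t ×ˢ (univ : Finset E), cylinder J T (v.snoc p.2 p.1) := by
  ext ω
  simp only [cylinderAt, cylinder_snoc, Set.mem_inter_iff, Set.mem_ofPred_eq, Set.mem_iUnion,
    mem_product, mem_Ioc, mem_univ, and_true, exists_prop, Prod.exists]
  constructor
  · rintro ⟨⟨hω, hs⟩, ht⟩
    exact ⟨_, _, ⟨hs, ht⟩, hω, rfl, rfl⟩
  · rintro ⟨θ, k, hθ, hω, -, rfl⟩
    exact ⟨⟨hω, hθ.1⟩, hθ.2⟩

theorem disjoint_cylinderAt (hTmono : ∀ ω, StrictMono fun n => T n ω) {v v' : History E} {r : ℕ}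
    (hv : v.lastTime ≤ r) (hv' : v'.lastTime ≤ r) (hne : v ≠ v') :
    Disjoint (cylinderAt J T v r) (cylinderAt J T v' r) := by
  refine Set.disjoint_left.2 fun ω ⟨hω, hr⟩ ⟨hω', hr'⟩ => hne ?_
  obtain ⟨m, f, g⟩ := v
  obtain ⟨m', f', g'⟩ := v'
  have h₁ := (hTmono ω).lt_iff_lt.1 ((last_of_mem_cylinder hω).2.trans_lt (hv.trans_lt hr'))
  have h₂ := (hTmono ω).lt_iff_lt.1 ((last_of_mem_cylinder hω').2.trans_lt (hv'.trans_lt hr))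
  obtain rfl : m = m' := by simp only at h₁ h₂; omega
  have hf : f = f' := funext fun h => (hω h).1.symm.trans (hω' h).1
  have hg : g = g' := funext fun h => (hω h).2.symm.trans (hω' h).2
  rw [hf, hg]

structure IsSemiMarkovChainOf (J : ℕ → Ω → E) (T N : ℕ → Ω → ℕ) (Z : ℕ → Ω → E)
    (B : ℕ → Ω → ℕ) : Prop where
  counting : ∀ t ω, N t ω = Nat.findGreatest (fun n => T n ω ≤ t) t
  state : ∀ t ω, Z t ω = J (N t ω) ω
  backward : ∀ t ω, B t ω = t - T (N t ω) ω

variable {N : ℕ → Ω → ℕ} {Z : ℕ → Ω → E} {B : ℕ → Ω → ℕ}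

section Decomposition

theorem Z_B_of_mem_cylinderAt (hTmono : ∀ ω, StrictMono fun n => T n ω)
    (hchain : IsSemiMarkovChainOf J T N Z B)
    {v : History E} {r : ℕ} {ω : Ω} (hω : ω ∈ cylinderAt J T v r) (hvr : v.lastTime ≤ r) :
    Z r ω = v.lastState ∧ B r ω = r - v.lastTime := by
  obtain ⟨hJv, hTv⟩ := last_of_mem_cylinder hω.1
  have hNr : N r ω = v.1 :=
    (hchain.counting r ω).trans (findGreatest_le_eq_of_strictMono (hTmono ω) (hTv ▸ hvr) hω.2)
  rw [hchain.state, hchain.backward, hNr, hJv, hTv]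
  exact ⟨rfl, rfl⟩

theorem setOf_Z_B_eq_iUnion (hT0 : ∀ ω, T 0 ω = 0) (hTmono : ∀ ω, StrictMono fun n => T n ω)
    (hchain : IsSemiMarkovChainOf J T N Z B) (κ : E) (w r : ℕ) :
    {ω | Z r ω = κ ∧ B r ω = w}
      = ⋃ v : {v : History E // v.lastState = κ ∧ v.lastTime + w = r}, cylinderAt J T v r := by
  ext ω
  simp only [Set.mem_ofPred_eq, Set.mem_iUnion, Subtype.exists, exists_prop]
  constructor
  · rintro ⟨rfl, rfl⟩
    obtain ⟨hle, hlt⟩ := findGreatest_le_mem_Ico (hTmono ω) (hT0 ω) r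
    rw [← hchain.counting] at hle hlt
    refine ⟨⟨N r ω, fun h => J h ω, fun h => T h ω⟩, ⟨(hchain.state r ω).symm, ?_⟩,
      fun _ => ⟨rfl, rfl⟩, hlt⟩
    simp only [lastTime, hchain.backward, Fin.val_last]
    omega
  · rintro ⟨v, ⟨rfl, rfl⟩, hω⟩
    obtain ⟨hZω, hBω⟩ := Z_B_of_mem_cylinderAt hTmono hchain hω (Nat.le_add_right _ _)
    exact ⟨hZω, by omega⟩

theorem setOf_Z_B_inter_cylinderAt_sdiff [DecidableEq E] (hTmono : ∀ ω, StrictMono fun n => T n ω)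
    (hchain : IsSemiMarkovChainOf J T N Z B)
    (j : E) (u' : ℕ) {v : History E} {s t : ℕ} (hvs : v.lastTime ≤ s) (hst : s ≤ t) :
    ({ω | Z t ω = j ∧ B t ω = u'} ∩ cylinderAt J T v s) \ {ω | T (v.1 + 1) ω ≤ t}
      = if v.lastState = j ∧ v.lastTime + u' = t then cylinderAt J T v t else ∅ := by
  ext ω
  by_cases hω : ω ∈ cylinderAt J T v t
  · obtain ⟨hZt, hBt⟩ := Z_B_of_mem_cylinderAt hTmono hchain hω (hvs.trans hst)
    have hωs : ω ∈ cylinderAt J T v s := ⟨hω.1, hst.trans_lt hω.2⟩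
    have hiff : (v.lastState = j ∧ t - v.lastTime = u') ↔ (v.lastState = j ∧ v.lastTime + u' = t) :=
      and_congr_right fun _ => by omega
    have hωt : ¬ T (v.1 + 1) ω ≤ t := not_le.2 hω.2
    simp only [Set.mem_sdiff, Set.mem_inter_iff, Set.mem_ofPred_eq, hZt, hBt, hωs, hωt, hiff,
      and_true, not_false_eq_true]
    split_ifs <;> simp [*]
  · have : ω ∉ ({ω | Z t ω = j ∧ B t ω = u'} ∩ cylinderAt J T v s) \ {ω | T (v.1 + 1) ω ≤ t} :=
      fun h => hω ⟨h.1.2.1, by simpa using h.2⟩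
    split_ifs <;> simp [hω, this]

variable [MeasurableSpace Ω] {μ : Measure Ω} [MeasurableSpace E] [MeasurableSingletonClass E]

theorem measurableSet_cylinderAt (hJ : ∀ n, Measurable (J n)) (hT : ∀ n, Measurable (T n))
    (v : History E) (r : ℕ) : MeasurableSet (cylinderAt J T v r) :=
  (measurableSet_cylinder hJ hT v).inter (hT _ measurableSet_Ioi)

theorem measureReal_inter_cylinderAt_inter_le [Fintype E] [IsFiniteMeasure μ]
    (hJ : ∀ n, Measurable (J n)) (hT : ∀ n, Measurable (T n)) {D : Set Ω} (hD : MeasurableSet D)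
    (v : History E) (s t : ℕ) :
    μ.real (D ∩ cylinderAt J T v s ∩ {ω | T (v.1 + 1) ω ≤ t})
      = ∑ k, ∑ θ ∈ Ioc s t, μ.real (D ∩ cylinder J T (v.snoc k θ)) := by
  rw [Set.inter_assoc, cylinderAt_inter_le_eq_biUnion, Set.inter_iUnion₂,
    measureReal_biUnion_finset ?_ ?_ fun _ _ => measure_ne_top μ _, sum_product_right]
  · exact fun p _ p' _ hne => ((pairwise_disjoint_cylinder_snoc v) hne).mono
      Set.inter_subset_right Set.inter_subset_right
  · exact fun p _ => hD.inter (measurableSet_cylinder hJ hT _)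

theorem measurableSet_setOf_Z_B [Countable E] (hJ : ∀ n, Measurable (J n))
    (hT : ∀ n, Measurable (T n)) (hT0 : ∀ ω, T 0 ω = 0) (hTmono : ∀ ω, StrictMono fun n => T n ω)
    (hchain : IsSemiMarkovChainOf J T N Z B) (κ : E) (w r : ℕ) :
    MeasurableSet {ω | Z r ω = κ ∧ B r ω = w} := by
  rw [setOf_Z_B_eq_iUnion hT0 hTmono hchain]
  exact .iUnion fun v => measurableSet_cylinderAt hJ hT v r

theorem measureReal_inter_setOf_Z_B [Countable E] [IsFiniteMeasure μ] (hJ : ∀ n, Measurable (J n))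
    (hT : ∀ n, Measurable (T n)) (hT0 : ∀ ω, T 0 ω = 0) (hTmono : ∀ ω, StrictMono fun n => T n ω)
    (hchain : IsSemiMarkovChainOf J T N Z B)
    {A : Set Ω} (hA : MeasurableSet A) (κ : E) (w r : ℕ) :
    μ.real (A ∩ {ω | Z r ω = κ ∧ B r ω = w})
      = ∑' v : {v : History E // v.lastState = κ ∧ v.lastTime + w = r},
          μ.real (A ∩ cylinderAt J T v r) := by
  rw [setOf_Z_B_eq_iUnion hT0 hTmono hchain, Set.inter_iUnion]
  refine measureReal_iUnion_of_pairwise (fun v v' hne => ?_)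
    fun v => hA.inter (measurableSet_cylinderAt hJ hT v r)
  have hv := v.2.2
  have hv' := v'.2.2
  exact (disjoint_cylinderAt hTmono (by omega) (by omega) (Subtype.coe_injective.ne hne)).mono
    Set.inter_subset_right Set.inter_subset_right

theorem measureReal_setOf_Z_B_zero [Countable E] [IsFiniteMeasure μ] (hJ : ∀ n, Measurable (J n))
    (hT : ∀ n, Measurable (T n)) (hT0 : ∀ ω, T 0 ω = 0) (hTmono : ∀ ω, StrictMono fun n => T n ω)
    (hchain : IsSemiMarkovChainOf J T N Z B) (k : E) (θ : ℕ) :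
    μ.real {ω | Z θ ω = k ∧ B θ ω = 0}
      = ∑' v : {v : History E // v.lastState = k ∧ v.lastTime + 0 = θ},
          μ.real (cylinder J T v) := by
  rw [← Set.univ_inter {ω | Z θ ω = k ∧ B θ ω = 0},
    measureReal_inter_setOf_Z_B hJ hT hT0 hTmono hchain .univ]
  refine tsum_congr ?_
  rintro ⟨v, -, hvθ⟩
  dsimp only
  rw [Set.univ_inter, ← hvθ, add_zero, cylinderAt_lastTime hTmono]

theorem exists_measureReal_cylinder_ne_zero [Countable E] [IsFiniteMeasure μ]
    (hJ : ∀ n, Measurable (J n)) (hT : ∀ n, Measurable (T n)) (hT0 : ∀ ω, T 0 ω = 0)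
    (hTmono : ∀ ω, StrictMono fun n => T n ω)
    (hchain : IsSemiMarkovChainOf J T N Z B) {i : E} {u s : ℕ}
    (hC : μ.real {ω | Z s ω = i ∧ B s ω = u} ≠ 0) :
    ∃ v : History E, v.lastState = i ∧ v.lastTime + u = s ∧ μ.real (cylinder J T v) ≠ 0 := by
  rw [← Set.univ_inter {ω | Z s ω = i ∧ B s ω = u},
    measureReal_inter_setOf_Z_B hJ hT hT0 hTmono hchain .univ] at hC
  by_contra! h
  refine hC ((tsum_congr fun v => ?_).trans tsum_zero)
  rw [Set.univ_inter]
  exact measureReal_mono_null Set.inter_subset_left (h v v.2.1 v.2.2)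

end Decomposition

section MarkovRenewal

variable [MeasurableSpace Ω] {μ : Measure Ω} {a : ℕ} {Q : ℕ → ℕ → E → E → ℕ → ℝ}

def IsMarkovRenewalKernel (μ : Measure Ω) (J : ℕ → Ω → E) (T : ℕ → Ω → ℕ) (a : ℕ)
    (Q : ℕ → ℕ → E → E → ℕ → ℝ) : Prop :=
  ∀ (v : History E) (k : E) (x : ℕ),
    μ.real ({ω | J (v.1 + 1) ω = k ∧ T (v.1 + 1) ω ≤ x} ∩ cylinder J T v)
      = Q (a + v.lastTime) v.lastTime v.lastState k x * μ.real (cylinder J T v)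

theorem isMarkovRenewalKernel_of_forall
    (hMRP : ∀ (n : ℕ) (ih : ℕ → E) (th : ℕ → ℕ) (j : E) (t : ℕ),
      (μ ({ω | J (n + 1) ω = j ∧ T (n + 1) ω ≤ t}
          ∩ {ω | ∀ h ≤ n, J h ω = ih h ∧ T h ω = th h})).toReal
        = Q (a + th n) (th n) (ih n) j t
            * (μ {ω | ∀ h ≤ n, J h ω = ih h ∧ T h ω = th h}).toReal) :
    IsMarkovRenewalKernel μ J T a Q := by
  intro v k x
  have hcyl : {ω | ∀ h ≤ v.1, J h ω = v.2.1 (Fin.clamp h v.1) ∧ T h ω = v.2.2 (Fin.clamp h v.1)}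
      = cylinder J T v := by
    ext ω
    simp only [cylinder, Set.mem_ofPred_eq]
    constructor
    · intro H h
      simpa [Fin.clamp, Nat.min_eq_left (Fin.is_le h)] using H h (Fin.is_le h)
    · intro H h hh
      simpa [Fin.clamp, Nat.min_eq_left hh] using H ⟨h, by omega⟩
  have := hMRP v.1 (fun h => v.2.1 (Fin.clamp h v.1)) (fun h => v.2.2 (Fin.clamp h v.1)) k x
  simp only [hcyl, ← measureReal_def] at this
  simpa [lastTime, lastState, Fin.clamp, Fin.last] using this

variable [IsFiniteMeasure μ]

theorem IsMarkovRenewalKernel.measureReal_cylinder_snoc (hQ : IsMarkovRenewalKernel μ J T a Q)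
    (hT : ∀ n, Measurable (T n)) (v : History E) (k : E) {θ : ℕ} (hθ : 0 < θ) :
    μ.real (cylinder J T (v.snoc k θ))
      = (Q (a + v.lastTime) v.lastTime v.lastState k θ
          - Q (a + v.lastTime) v.lastTime v.lastState k (θ - 1)) * μ.real (cylinder J T v) := by
  have hsplit := measureReal_inter_add_sdiff (μ := μ)
    (s := {ω | J (v.1 + 1) ω = k ∧ T (v.1 + 1) ω ≤ θ} ∩ cylinder J T v)
    (t := {ω | T (v.1 + 1) ω ≤ θ - 1}) (hT _ measurableSet_Iic)
  have hinter : {ω | J (v.1 + 1) ω = k ∧ T (v.1 + 1) ω ≤ θ} ∩ cylinder J T v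
      ∩ {ω | T (v.1 + 1) ω ≤ θ - 1}
      = {ω | J (v.1 + 1) ω = k ∧ T (v.1 + 1) ω ≤ θ - 1} ∩ cylinder J T v := by
    ext ω
    simp only [Set.mem_inter_iff, Set.mem_ofPred_eq]
    constructor
    · rintro ⟨⟨⟨hk, -⟩, hω⟩, hle⟩
      exact ⟨⟨hk, hle⟩, hω⟩
    · rintro ⟨⟨hk, hle⟩, hω⟩
      exact ⟨⟨⟨hk, by omega⟩, hω⟩, hle⟩
  have hsdiff : ({ω | J (v.1 + 1) ω = k ∧ T (v.1 + 1) ω ≤ θ} ∩ cylinder J T v) \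
      {ω | T (v.1 + 1) ω ≤ θ - 1} = cylinder J T (v.snoc k θ) := by
    ext ω
    simp only [cylinder_snoc, Set.mem_sdiff, Set.mem_inter_iff, Set.mem_ofPred_eq, not_le]
    constructor
    · rintro ⟨⟨⟨hk, hle⟩, hω⟩, hlt⟩
      exact ⟨hω, hk, by omega⟩
    · rintro ⟨hω, hk, rfl⟩
      exact ⟨⟨⟨hk, le_rfl⟩, hω⟩, by omega⟩
  rw [hinter, hsdiff, hQ, hQ] at hsplit
  linarith

variable [MeasurableSpace E] [MeasurableSingletonClass E]

theorem IsMarkovRenewalKernel.measureReal_cylinderAt [Fintype E]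
    (hQ : IsMarkovRenewalKernel μ J T a Q) (hJ : ∀ n, Measurable (J n))
    (hT : ∀ n, Measurable (T n)) (v : History E) (x : ℕ) :
    μ.real (cylinderAt J T v x)
      = (1 - ∑ k, Q (a + v.lastTime) v.lastTime v.lastState k x) * μ.real (cylinder J T v) := by
  have hcover : cylinder J T v ∩ {ω | T (v.1 + 1) ω ≤ x}
      = ⋃ k ∈ (univ : Finset E), {ω | J (v.1 + 1) ω = k ∧ T (v.1 + 1) ω ≤ x} ∩ cylinder J T v := by
    ext ω
    simp only [Set.mem_inter_iff, Set.mem_ofPred_eq, Set.mem_iUnion, mem_univ, exists_true_left,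
      exists_and_left]
    tauto
  have hle : μ.real (cylinder J T v ∩ {ω | T (v.1 + 1) ω ≤ x})
      = ∑ k, Q (a + v.lastTime) v.lastTime v.lastState k x * μ.real (cylinder J T v) := by
    rw [hcover, measureReal_biUnion_finset ?_ ?_ fun _ _ => measure_ne_top μ _]
    · exact sum_congr rfl fun k _ => hQ v k x
    · exact fun k _ k' _ hne => Set.disjoint_left.2 fun ω h h' => hne (h.1.1.symm.trans h'.1.1)
    · exact fun k _ => ((hJ _ (measurableSet_singleton k)).inter (hT _ measurableSet_Iic)).inter
        (measurableSet_cylinder hJ hT v)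
  have hsplit := measureReal_inter_add_sdiff (μ := μ) (s := cylinder J T v)
    (t := {ω | T (v.1 + 1) ω ≤ x}) (hT _ measurableSet_Iic)
  have hsdiff : cylinder J T v \ {ω | T (v.1 + 1) ω ≤ x} = cylinderAt J T v x := by
    ext ω
    simp [cylinderAt]
  rw [hle, hsdiff, ← sum_mul] at hsplit
  linarith

end MarkovRenewal

section FirstStep

variable [Fintype E] [DecidableEq E] (Q q : ℕ → ℕ → E → E → ℕ → ℝ) (a : ℕ) (j : E) (u' t : ℕ)

/-- First-step analysis of `ℙ[Z t = j, B t = u' | entry into κ at τ, no transition in (τ, s]]`: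
either the sojourn in `κ` lasts beyond `t`, or the next transition enters `k` at some
`θ ∈ (s, t - u']` and the process restarts there. -/
noncomputable def sojournProb (τ : ℕ) (κ : E) (s : ℕ) : ℝ :=
  (if κ = j ∧ τ + u' = t then 1 - ∑ k, Q (a + τ) τ κ k t else 0)
    + ∑ k, ∑ θ ∈ (Icc (s + 1) (t - u')).attach, q (a + τ) τ κ k θ * sojournProb θ k θ
termination_by t - u' - s
decreasing_by have := mem_Icc.1 θ.2; omega

theorem sojournProb_eq (τ : ℕ) (κ : E) (s : ℕ) :
    sojournProb Q q a j u' t τ κ s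
      = (if κ = j ∧ τ + u' = t then 1 - ∑ k, Q (a + τ) τ κ k t else 0)
        + ∑ k, ∑ θ ∈ Icc (s + 1) (t - u'), q (a + τ) τ κ k θ * sojournProb Q q a j u' t θ k θ := by
  rw [sojournProb]
  congr 1
  exact sum_congr rfl fun k _ =>
    sum_attach (Icc (s + 1) (t - u')) fun θ => q (a + τ) τ κ k θ * sojournProb Q q a j u' t θ k θ

theorem sojournProb_self_eq_zero {θ : ℕ} (k : E) (h : t < θ + u') :
    sojournProb Q q a j u' t θ k θ = 0 := by
  rw [sojournProb_eq, if_neg (by omega), Icc_eq_empty (by omega)]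
  simp

end FirstStep

section Recursion

variable [MeasurableSpace Ω] {μ : Measure Ω} [IsFiniteMeasure μ] {a : ℕ}
  {Q q : ℕ → ℕ → E → E → ℕ → ℝ}

theorem kernel_eq_zero_of_measureReal_setOf_Z_B_eq_zero
    (hT : ∀ n, Measurable (T n)) (hTmono : ∀ ω, StrictMono fun n => T n ω)
    (hchain : IsSemiMarkovChainOf J T N Z B)
    (hQ : IsMarkovRenewalKernel μ J T a Q)
    (hq : ∀ α s i j t, q α s i j t = if s < t then Q α s i j t - Q α s i j (t - 1) else 0)
    {v : History E} (hv : μ.real (cylinder J T v) ≠ 0) {k : E} {θ : ℕ} (hvθ : v.lastTime < θ)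
    (h0 : μ.real {ω | Z θ ω = k ∧ B θ ω = 0} = 0) :
    q (a + v.lastTime) v.lastTime v.lastState k θ = 0 := by
  have hsub : cylinder J T (v.snoc k θ) ⊆ {ω | Z θ ω = k ∧ B θ ω = 0} := fun ω hω => by
    rw [← cylinderAt_lastTime hTmono] at hω
    simpa using Z_B_of_mem_cylinderAt hTmono hchain hω le_rfl
  have hnull := measureReal_mono_null hsub h0
  rw [hQ.measureReal_cylinder_snoc hT _ _ (by omega)] at hnull
  rw [hq, if_pos hvθ]
  exact (mul_eq_zero.1 hnull).resolve_right hv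

variable [MeasurableSpace E] [MeasurableSingletonClass E]

theorem measureReal_setOf_Z_B [Fintype E] (hJ : ∀ n, Measurable (J n))
    (hT : ∀ n, Measurable (T n)) (hT0 : ∀ ω, T 0 ω = 0) (hTmono : ∀ ω, StrictMono fun n => T n ω)
    (hchain : IsSemiMarkovChainOf J T N Z B)
    (hQ : IsMarkovRenewalKernel μ J T a Q) (i : E) (u s : ℕ) :
    μ.real {ω | Z s ω = i ∧ B s ω = u}
      = (1 - ∑ k, Q (a + (s - u)) (s - u) i k s)
          * ∑' v : {v : History E // v.lastState = i ∧ v.lastTime + u = s},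
              μ.real (cylinder J T v) := by
  rw [← Set.univ_inter {ω | Z s ω = i ∧ B s ω = u},
    measureReal_inter_setOf_Z_B hJ hT hT0 hTmono hchain .univ, ← tsum_mul_left]
  refine tsum_congr ?_
  rintro ⟨v, hvi, hvs⟩
  dsimp only
  rw [Set.univ_inter, hQ.measureReal_cylinderAt hJ hT, hvi, show v.lastTime = s - u by omega]

variable [Fintype E] [DecidableEq E]

theorem measureReal_setOf_Z_B_inter_cylinderAt_sdiff (hJ : ∀ n, Measurable (J n))
    (hT : ∀ n, Measurable (T n)) (hTmono : ∀ ω, StrictMono fun n => T n ω)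
    (hchain : IsSemiMarkovChainOf J T N Z B) (hQ : IsMarkovRenewalKernel μ J T a Q)
    (j : E) (u' : ℕ) {v : History E} {s t : ℕ} (hvs : v.lastTime ≤ s) (hst : s ≤ t) :
    μ.real (({ω | Z t ω = j ∧ B t ω = u'} ∩ cylinderAt J T v s) \ {ω | T (v.1 + 1) ω ≤ t})
      = (if v.lastState = j ∧ v.lastTime + u' = t then
          1 - ∑ k, Q (a + v.lastTime) v.lastTime v.lastState k t else 0)
        * μ.real (cylinder J T v) := by
  rw [setOf_Z_B_inter_cylinderAt_sdiff hTmono hchain j u' hvs hst]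
  split_ifs
  · exact hQ.measureReal_cylinderAt hJ hT v t
  · simp

theorem measureReal_setOf_Z_B_inter_cylinderAt (hJ : ∀ n, Measurable (J n))
    (hT : ∀ n, Measurable (T n)) (hTmono : ∀ ω, StrictMono fun n => T n ω)
    (hchain : IsSemiMarkovChainOf J T N Z B) (hQ : IsMarkovRenewalKernel μ J T a Q)
    (hq : ∀ α s i j t, q α s i j t = if s < t then Q α s i j t - Q α s i j (t - 1) else 0)
    {j : E} {u' t : ℕ} (hD : MeasurableSet {ω | Z t ω = j ∧ B t ω = u'})
    (v : History E) {s : ℕ} (hvs : v.lastTime ≤ s) (hst : s ≤ t) :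
    μ.real ({ω | Z t ω = j ∧ B t ω = u'} ∩ cylinderAt J T v s)
      = sojournProb Q q a j u' t v.lastTime v.lastState s * μ.real (cylinder J T v) := by
  obtain ⟨n, hn⟩ : ∃ n, t - v.lastTime = n := ⟨_, rfl⟩
  induction n using Nat.strong_induction_on generalizing v s with
  | _ n ih =>
  rw [← measureReal_inter_add_sdiff (t := {ω | T (v.1 + 1) ω ≤ t}) (hT _ measurableSet_Iic),
    measureReal_inter_cylinderAt_inter_le hJ hT hD,
    measureReal_setOf_Z_B_inter_cylinderAt_sdiff hJ hT hTmono hchain hQ j u' hvs hst,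
    sojournProb_eq, add_mul, add_comm, sum_mul]
  congr 1
  refine sum_congr rfl fun k _ => ?_
  rw [sum_mul]
  calc ∑ θ ∈ Ioc s t, μ.real ({ω | Z t ω = j ∧ B t ω = u'} ∩ cylinder J T (v.snoc k θ))
      = ∑ θ ∈ Ioc s t, q (a + v.lastTime) v.lastTime v.lastState k θ
          * sojournProb Q q a j u' t θ k θ * μ.real (cylinder J T v) := by
        refine sum_congr rfl fun θ hθ => ?_
        obtain ⟨hsθ, hθt⟩ := mem_Ioc.1 hθ
        have hrestart := ih (t - θ) (by omega) (v.snoc k θ) le_rfl (by simpa using hθt) (by simp)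
        rw [cylinderAt_lastTime hTmono, lastTime_snoc, lastState_snoc] at hrestart
        rw [hrestart, hQ.measureReal_cylinder_snoc hT _ _ (by omega), hq, if_pos (by omega)]
        ring
    _ = ∑ θ ∈ Icc (s + 1) (t - u'), q (a + v.lastTime) v.lastTime v.lastState k θ
          * sojournProb Q q a j u' t θ k θ * μ.real (cylinder J T v) := by
        refine (sum_subset (fun θ hθ => ?_) fun θ hθ hθ' => ?_).symm
        · simp only [mem_Icc, mem_Ioc] at hθ ⊢
          omega
        · simp only [mem_Icc, mem_Ioc] at hθ hθ'
          rw [sojournProb_self_eq_zero _ _ _ _ _ _ k (by omega), mul_zero, zero_mul]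

theorem measureReal_setOf_Z_B_inter_setOf_Z_B (hJ : ∀ n, Measurable (J n))
    (hT : ∀ n, Measurable (T n)) (hT0 : ∀ ω, T 0 ω = 0) (hTmono : ∀ ω, StrictMono fun n => T n ω)
    (hchain : IsSemiMarkovChainOf J T N Z B)
    (hQ : IsMarkovRenewalKernel μ J T a Q)
    (hq : ∀ α s i j t, q α s i j t = if s < t then Q α s i j t - Q α s i j (t - 1) else 0)
    {j : E} {u' t : ℕ} (hD : MeasurableSet {ω | Z t ω = j ∧ B t ω = u'}) (i : E) {u s : ℕ}
    (hst : s ≤ t) :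
    μ.real ({ω | Z t ω = j ∧ B t ω = u'} ∩ {ω | Z s ω = i ∧ B s ω = u})
      = sojournProb Q q a j u' t (s - u) i s
          * ∑' v : {v : History E // v.lastState = i ∧ v.lastTime + u = s},
              μ.real (cylinder J T v) := by
  rw [measureReal_inter_setOf_Z_B hJ hT hT0 hTmono hchain hD, ← tsum_mul_left]
  refine tsum_congr ?_
  rintro ⟨v, hvi, hvs⟩
  dsimp only
  rw [measureReal_setOf_Z_B_inter_cylinderAt hJ hT hTmono hchain hQ hq hD v (by omega) hst, hvi,
    show v.lastTime = s - u by omega]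

theorem measureReal_inter_div_measureReal_setOf_Z_B (hJ : ∀ n, Measurable (J n))
    (hT : ∀ n, Measurable (T n)) (hT0 : ∀ ω, T 0 ω = 0) (hTmono : ∀ ω, StrictMono fun n => T n ω)
    (hchain : IsSemiMarkovChainOf J T N Z B) (hQ : IsMarkovRenewalKernel μ J T a Q)
    (hq : ∀ α s i j t, q α s i j t = if s < t then Q α s i j t - Q α s i j (t - 1) else 0)
    {j : E} {u' t : ℕ} (hD : MeasurableSet {ω | Z t ω = j ∧ B t ω = u'}) {i : E} {u s : ℕ}
    (hst : s ≤ t) (hC : μ.real {ω | Z s ω = i ∧ B s ω = u} ≠ 0) :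
    μ.real ({ω | Z t ω = j ∧ B t ω = u'} ∩ {ω | Z s ω = i ∧ B s ω = u})
        / μ.real {ω | Z s ω = i ∧ B s ω = u}
      = sojournProb Q q a j u' t (s - u) i s / (1 - ∑ k, Q (a + (s - u)) (s - u) i k s) := by
  rw [measureReal_setOf_Z_B hJ hT hT0 hTmono hchain hQ] at hC ⊢
  rw [measureReal_setOf_Z_B_inter_setOf_Z_B hJ hT hT0 hTmono hchain hQ hq hD i hst,
    mul_div_mul_right _ _ (right_ne_zero_of_mul hC)]

theorem kernel_mul_condProb_entry (hJ : ∀ n, Measurable (J n))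
    (hT : ∀ n, Measurable (T n)) (hT0 : ∀ ω, T 0 ω = 0) (hTmono : ∀ ω, StrictMono fun n => T n ω)
    (hchain : IsSemiMarkovChainOf J T N Z B) (hQ : IsMarkovRenewalKernel μ J T a Q)
    (hq : ∀ α s i j t, q α s i j t = if s < t then Q α s i j t - Q α s i j (t - 1) else 0)
    {j : E} {u' t : ℕ} (hD : MeasurableSet {ω | Z t ω = j ∧ B t ω = u'})
    {v : History E} (hv : μ.real (cylinder J T v) ≠ 0) (k : E) {θ : ℕ} (hvθ : v.lastTime < θ)
    (hθt : θ ≤ t) :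
    q (a + v.lastTime) v.lastTime v.lastState k θ
        * (μ.real ({ω | Z t ω = j ∧ B t ω = u'} ∩ {ω | Z θ ω = k ∧ B θ ω = 0})
          / μ.real {ω | Z θ ω = k ∧ B θ ω = 0})
      = q (a + v.lastTime) v.lastTime v.lastState k θ * sojournProb Q q a j u' t θ k θ := by
  by_cases h0 : μ.real {ω | Z θ ω = k ∧ B θ ω = 0} = 0
  · rw [kernel_eq_zero_of_measureReal_setOf_Z_B_eq_zero hT hTmono hchain hQ hq hv hvθ h0,
      zero_mul, zero_mul]
  · rw [measureReal_setOf_Z_B_inter_setOf_Z_B hJ hT hT0 hTmono hchain hQ hq hD k hθt,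
      ← measureReal_setOf_Z_B_zero hJ hT hT0 hTmono hchain, Nat.sub_zero,
      mul_div_cancel_right₀ _ h0]

end Recursion

end AgeIndexedSemiMarkov

open AgeIndexedSemiMarkov

theorem age_indexed_semi_markov_backward_recursion_general
    {Ω : Type*} [MeasurableSpace Ω] (μ : Measure Ω) [IsProbabilityMeasure μ]
    {E : Type*} [Fintype E] [DecidableEq E] [MeasurableSpace E] [MeasurableSingletonClass E]
    (J : ℕ → Ω → E) (T : ℕ → Ω → ℕ)
    (hJmeas : ∀ n, Measurable (J n)) (hTmeas : ∀ n, Measurable (T n))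
    (hT0 : ∀ ω, T 0 ω = 0)
    (hTmono : ∀ ω, StrictMono fun n => T n ω)
    (a : ℕ)
    -- the counting process, the age-indexed semi-Markov chain, the backward time
    (N : ℕ → Ω → ℕ) (hN : ∀ t ω, N t ω = Nat.findGreatest (fun n => T n ω ≤ t) t)
    (Z : ℕ → Ω → E) (hZ : ∀ t ω, Z t ω = J (N t ω) ω)
    (B : ℕ → Ω → ℕ) (hB : ∀ t ω, B t ω = t - T (N t ω) ω)
    -- the age-indexed semi-Markov kernel `ᵅQ_{ij}(s;t)`, where `α` is the age at the
    -- entrance time `s`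
    (Q : ℕ → ℕ → E → E → ℕ → ℝ)
    -- the age-indexed Markov renewal hypothesis
    (hMRP : ∀ (n : ℕ) (ih : ℕ → E) (th : ℕ → ℕ) (j : E) (t : ℕ),
      (μ ({ω | J (n + 1) ω = j ∧ T (n + 1) ω ≤ t}
          ∩ {ω | ∀ h ≤ n, J h ω = ih h ∧ T h ω = th h})).toReal
        = Q (a + th n) (th n) (ih n) j t
            * (μ {ω | ∀ h ≤ n, J h ω = ih h ∧ T h ω = th h}).toReal)
    -- `ᵅH̄_i(s;t)`: the probability of remaining in state `i` up to time `t`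
    (Hbar : ℕ → ℕ → E → ℕ → ℝ)
    (hHbar : ∀ α s i t, Hbar α s i t = 1 - ∑ j : E, Q α s i j t)
    -- the kernel increment `ᵅq_{ij}(s;t)`
    (q : ℕ → ℕ → E → E → ℕ → ℝ)
    (hq : ∀ α s i j t, q α s i j t =
      if s < t then Q α s i j t - Q α s i j (t - 1) else 0)
    -- the transition probability function with initial and final backward
    (φ : E → ℕ → ℕ → E → ℕ → ℕ → ℝ)
    (hφ : ∀ i u s j u' t, φ i u s j u' t =
      (μ ({ω | Z t ω = j ∧ B t ω = u'} ∩ {ω | Z s ω = i ∧ B s ω = u})).toReal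
        / (μ {ω | Z s ω = i ∧ B s ω = u}).toReal)
    (i j : E) (u s u' t : ℕ) (hus : u ≤ s) (hst : s ≤ t)
    (hpos : 0 < μ {ω | Z s ω = i ∧ B s ω = u}) :
    φ i u s j u' t
      = (if i = j then (1 : ℝ) else 0) * (if u' = t - s + u then (1 : ℝ) else 0)
          * (Hbar (a + s - u) (s - u) i t / Hbar (a + s - u) (s - u) i s)
        + ∑ k : E, ∑ θ ∈ Finset.Icc (s + 1) (t - u'),
            (q (a + s - u) (s - u) i k θ / Hbar (a + s - u) (s - u) i s)
              * φ k 0 θ j u' t := by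
  have hQ := isMarkovRenewalKernel_of_forall hMRP
  have hchain : IsSemiMarkovChainOf J T N Z B := ⟨hN, hZ, hB⟩
  have hD := measurableSet_setOf_Z_B hJmeas hTmeas hT0 hTmono hchain j u' t
  have hC := (measureReal_ne_zero_iff (μ := μ)).2 hpos.ne'
  obtain ⟨v, hvi, hvs, hv⟩ := exists_measureReal_cylinder_ne_zero hJmeas hTmeas hT0 hTmono hchain hC
  simp only [hφ, ← measureReal_def]
  rw [measureReal_inter_div_measureReal_setOf_Z_B hJmeas hTmeas hT0 hTmono hchain hQ hq hD hst hC,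
    Nat.add_sub_assoc hus, hHbar, hHbar, sojournProb_eq, add_div, sum_div]
  congr 1
  · have hback : s - u + u' = t ↔ u' = t - s + u := by omega
    simp only [hback, ite_and, ite_div, zero_div, mul_ite, mul_one, mul_zero, ite_mul, one_mul,
      zero_mul]
    split_ifs <;> rfl
  · refine sum_congr rfl fun k _ => ?_
    rw [sum_div]
    refine sum_congr rfl fun θ hθ => ?_
    obtain ⟨hsθ, hθt⟩ := mem_Icc.1 hθ
    have hentry := kernel_mul_condProb_entry hJmeas hTmeas hT0 hTmono hchain hQ hq hD hv k
      (show v.lastTime < θ by omega) (by omega)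
    rw [hvi, show v.lastTime = s - u by omega] at hentry
    rw [div_mul_eq_mul_div, hentry]

/-- **Recursive system of equations for the age-indexed semi-Markov transition
probability function with initial and final backward.**

`(J n)` are the health states at the transitions, `(T n)` the (strictly increasing)
transition times with `T 0 = 0`, and `a` the initial age, so that the age at the `n`-th
transition is `A n = a + T n`.  The triple `(Jₙ, Tₙ, Aₙ)` is a non-homogeneous Markov
renewal process with index: conditionally on any history of `(J, T)` up to the `n`-th
transition, the law of `(J (n+1), T (n+1))` is given by the age-indexed kernel `Q`,
evaluated at the age `a + T n` and time `T n` of the last transition (hypothesis `hMRP`,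
stated for every cylinder event of the natural filtration; both sides vanish when the
history has probability zero).

`N t = sup {n : T n ≤ t}` is the counting process, `Z t = J (N t)` the age-indexed
semi-Markov chain, `B t = t - T (N t)` the backward recurrence time,
`ᵃH̄ i (s;t) = 1 - Σ_j ᵃQ i j (s;t)`, `ᵃq i j (s;t)` the kernel increment, and
`φ i u s j u' t = ℙ[Z t = j, B t = u' | Z s = i, B s = u]` the age-indexed semi-Markov
transition probability function with initial and final backward (the further condition
`A_{N(s)} = a + T_{N(s)}` holds automatically).

Then, for all `i j : E`, `u ≤ s ≤ t`, `u'`, whenever the conditioning event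
`{Z s = i, B s = u}` has positive probability,

`φ_{ij}(u,s;u',t) = 1_{i=j} 1_{u'=t-s+u} · H̄_i(s-u;t)/H̄_i(s-u;s)
   + Σ_{k ∈ E} Σ_{θ=s+1}^{t-u'} (q_{ik}(s-u;θ)/H̄_i(s-u;s)) · φ_{kj}(0,θ;u',t)`,

where all kernel quantities are taken at age `a + s - u` (the age at the last
transition before `s`), and the inner `φ_{kj}(0,θ;u',t)` corresponds to age `a + θ`. -/
theorem age_indexed_semi_markov_backward_recursion
    {Ω : Type*} [MeasurableSpace Ω] (μ : Measure Ω) [IsProbabilityMeasure μ]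
    {E : Type*} [Fintype E] [DecidableEq E] [Nonempty E] [MeasurableSpace E] [MeasurableSingletonClass E]
    (J : ℕ → Ω → E) (T : ℕ → Ω → ℕ)
    (hJmeas : ∀ n, Measurable (J n)) (hTmeas : ∀ n, Measurable (T n))
    (hT0 : ∀ ω, T 0 ω = 0)
    (hTmono : ∀ ω, StrictMono fun n => T n ω)
    (a : ℕ)
    -- the counting process, the age-indexed semi-Markov chain, the backward time
    (N : ℕ → Ω → ℕ) (hN : ∀ t ω, N t ω = Nat.findGreatest (fun n => T n ω ≤ t) t)
    (Z : ℕ → Ω → E) (hZ : ∀ t ω, Z t ω = J (N t ω) ω)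
    (B : ℕ → Ω → ℕ) (hB : ∀ t ω, B t ω = t - T (N t ω) ω)
    -- the age-indexed semi-Markov kernel `ᵅQ_{ij}(s;t)`, where `α` is the age at the
    -- entrance time `s`
    (Q : ℕ → ℕ → E → E → ℕ → ℝ)
    -- the age-indexed Markov renewal hypothesis
    (hMRP : ∀ (n : ℕ) (ih : ℕ → E) (th : ℕ → ℕ) (j : E) (t : ℕ),
      (μ ({ω | J (n + 1) ω = j ∧ T (n + 1) ω ≤ t}
          ∩ {ω | ∀ h ≤ n, J h ω = ih h ∧ T h ω = th h})).toReal
        = Q (a + th n) (th n) (ih n) j t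
            * (μ {ω | ∀ h ≤ n, J h ω = ih h ∧ T h ω = th h}).toReal)
    -- `ᵅH̄_i(s;t)`: the probability of remaining in state `i` up to time `t`
    (Hbar : ℕ → ℕ → E → ℕ → ℝ)
    (hHbar : ∀ α s i t, Hbar α s i t = 1 - ∑ j : E, Q α s i j t)
    -- the kernel increment `ᵅq_{ij}(s;t)`
    (q : ℕ → ℕ → E → E → ℕ → ℝ)
    (hq : ∀ α s i j t, q α s i j t =
      if s < t then Q α s i j t - Q α s i j (t - 1) else 0)
    -- the transition probability function with initial and final backward
    (φ : E → ℕ → ℕ → E → ℕ → ℕ → ℝ)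
    (hφ : ∀ i u s j u' t, φ i u s j u' t =
      (μ ({ω | Z t ω = j ∧ B t ω = u'} ∩ {ω | Z s ω = i ∧ B s ω = u})).toReal
        / (μ {ω | Z s ω = i ∧ B s ω = u}).toReal)
    (i j : E) (u s u' t : ℕ) (hus : u ≤ s) (hst : s ≤ t)
    (hpos : 0 < μ {ω | Z s ω = i ∧ B s ω = u}) :
    φ i u s j u' t
      = (if i = j then (1 : ℝ) else 0) * (if u' = t - s + u then (1 : ℝ) else 0)
          * (Hbar (a + s - u) (s - u) i t / Hbar (a + s - u) (s - u) i s)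
        + ∑ k : E, ∑ θ ∈ Finset.Icc (s + 1) (t - u'),
            (q (a + s - u) (s - u) i k θ / Hbar (a + s - u) (s - u) i s)
              * φ k 0 θ j u' t :=
  age_indexed_semi_markov_backward_recursion_general μ J T hJmeas hTmeas hT0 hTmono a N hN Z hZ B hB
    Q hMRP Hbar hHbar q hq φ hφ i j u s u' t hus hst hpos
end

section
/- Let T be an ℕ-valued random variable with T ≥ 1 almost surely and survival function S(t) = ℙ[T > t], δ ∈ (0,1), and n ≥ 2. Suppose the annual premium p satisfies the equivalence principle 𝔼[δ^T · 1_{\{T ≤ n\}}] = p · 𝔼[PVUP], and that 𝔼[PVUP] > 0. Then p = ( Σ_{s=1}^{n} (S(s−1) − S(s)) δ^s ) / ( Σ_{s=1}^{n−1} (Σ_{r=0}^{s−1} δ^r)(S(s−1) − S(s)) + (Σ_{r=0}^{n} δ^r) S(n−1) ). -/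
open MeasureTheory Finset

/-!
Both present values are functions of `T` that are constant beyond the horizon `m`, so each
expectation splits over the atoms `{T = s}`, `1 ≤ s ≤ m`, and the tail `{T > m}`. The atoms have
mass `S(s-1) - S(s)` and the tail has mass `S(m)`; solving the equivalence principle for `p`
gives the quotient.
-/

namespace MeasureTheory

variable {Ω : Type*} [MeasurableSpace Ω] {μ : Measure Ω} {T : Ω → ℕ}

theorem measureReal_setOf_eq_eq_sub [IsFiniteMeasure μ] (hT : Measurable T) {s : ℕ}
    (hs : 1 ≤ s) :
    μ.real {ω | T ω = s} = μ.real {ω | s - 1 < T ω} - μ.real {ω | s < T ω} := by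
  have hsplit : {ω | s - 1 < T ω} = {ω | T ω = s} ∪ {ω | s < T ω} := by
    ext ω
    simp only [Set.mem_ofPred_eq, Set.mem_union]
    omega
  have hdisj : Disjoint {ω | T ω = s} {ω | s < T ω} :=
    Set.disjoint_left.mpr fun ω (h₁ : T ω = s) (h₂ : s < T ω) => by omega
  rw [hsplit, measureReal_union hdisj (hT measurableSet_Ioi)]
  ring

theorem integral_ite_le_eq_sum_Icc [IsFiniteMeasure μ] (hT : Measurable T)
    (hT1 : ∀ᵐ ω ∂μ, 1 ≤ T ω) (m : ℕ) (g : ℕ → ℝ) (c : ℝ) :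
    ∫ ω, (if T ω ≤ m then g (T ω) else c) ∂μ
      = ∑ s ∈ Icc 1 m, g s * μ.real {ω | T ω = s} + c * μ.real {ω | m < T ω} := by
  have hatom : ∀ s : ℕ, MeasurableSet {ω | T ω = s} := fun s => hT (measurableSet_singleton s)
  have htail : MeasurableSet {ω | m < T ω} := hT measurableSet_Ioi
  have hdecomp : (fun ω => if T ω ≤ m then g (T ω) else c) =ᵐ[μ] fun ω =>
      ∑ s ∈ Icc 1 m, {ω' | T ω' = s}.indicator (fun _ => g s) ω
        + {ω' | m < T ω'}.indicator (fun _ => c) ω := by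
    filter_upwards [hT1] with ω hω
    simp only [Set.indicator_apply, Set.mem_ofPred_eq]
    rw [sum_ite_eq (Icc 1 m) (T ω) g]
    by_cases h : T ω ≤ m
    · simp [h, hω]
    · simp [h, Nat.lt_of_not_le h]
  have hint : ∀ s ∈ Icc 1 m, Integrable ({ω' | T ω' = s}.indicator fun _ => g s) μ :=
    fun s _ => (integrable_const _).indicator (hatom s)
  rw [integral_congr_ae hdecomp, integral_add (integrable_finsetSum _ hint)
      ((integrable_const _).indicator htail), integral_finsetSum _ hint,
    integral_indicator_const _ htail, smul_eq_mul, mul_comm]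
  congr 1
  refine sum_congr rfl fun s _ => ?_
  rw [integral_indicator_const _ (hatom s), smul_eq_mul, mul_comm]

end MeasureTheory

theorem tip_fair_premium_general
    {Ω : Type*} [MeasurableSpace Ω] (μ : Measure Ω) [IsProbabilityMeasure μ]
    (T : Ω → ℕ) (hTmeas : Measurable T) (hT1 : ∀ᵐ ω ∂μ, 1 ≤ T ω)
    (δ : ℝ) (n : ℕ)
    (S : ℕ → ℝ) (hS : ∀ t, S t = (μ {ω | t < T ω}).toReal)
    (PVDB : Ω → ℝ) (hPVDB : ∀ ω, PVDB ω = if T ω ≤ n then δ ^ T ω else 0)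
    (PVUP : Ω → ℝ)
    (hPVUP : ∀ ω, PVUP ω =
      if T ω ≤ n - 1 then ∑ r ∈ Finset.range (T ω), δ ^ r
      else ∑ r ∈ Finset.range (n + 1), δ ^ r)
    (p : ℝ)
    (hequiv : ∫ ω, PVDB ω ∂μ = p * ∫ ω, PVUP ω ∂μ)
    (hpos : 0 < ∫ ω, PVUP ω ∂μ) :
    p = (∑ s ∈ Finset.Icc 1 n, (S (s - 1) - S s) * δ ^ s)
        / (∑ s ∈ Finset.Icc 1 (n - 1),
              (∑ r ∈ Finset.range s, δ ^ r) * (S (s - 1) - S s)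
           + (∑ r ∈ Finset.range (n + 1), δ ^ r) * S (n - 1)) := by
  have hatom : ∀ s, 1 ≤ s → μ.real {ω | T ω = s} = S (s - 1) - S s := fun s hs => by
    rw [hS, hS, measureReal_setOf_eq_eq_sub hTmeas hs]
    rfl
  have hDB : ∫ ω, PVDB ω ∂μ = ∑ s ∈ Icc 1 n, (S (s - 1) - S s) * δ ^ s := by
    rw [funext hPVDB, integral_ite_le_eq_sum_Icc hTmeas hT1 n (δ ^ ·) 0, zero_mul, add_zero]
    exact sum_congr rfl fun s hs => by rw [hatom s (mem_Icc.mp hs).1, mul_comm]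
  have hUP : ∫ ω, PVUP ω ∂μ
      = ∑ s ∈ Icc 1 (n - 1), (∑ r ∈ range s, δ ^ r) * (S (s - 1) - S s)
        + (∑ r ∈ range (n + 1), δ ^ r) * S (n - 1) := by
    rw [funext hPVUP,
      integral_ite_le_eq_sum_Icc hTmeas hT1 (n - 1) (fun s => ∑ r ∈ range s, δ ^ r),
      sum_congr rfl fun s hs => by rw [hatom s (mem_Icc.mp hs).1], hS]
    rfl
  rw [← hDB, ← hUP, eq_div_iff hpos.ne', hequiv]

/-- **Fair premium of a temporary insurance policy under the equivalence principle.**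
`T` is the ℕ-valued time of death, with `T ≥ 1` almost surely, `S t = ℙ[T > t]` the
survival function, `δ ∈ (0,1)` the discount factor and `n ≥ 2` the maturity.
`PVDB = δ^T · 1_{T ≤ n}` is the present value of the death benefit and `PVUP` the
present value of unitary premiums.  If the annual premium `p` satisfies the equivalence
principle `𝔼[PVDB] = p · 𝔼[PVUP]` and `𝔼[PVUP] > 0`, then
`p = (Σ_{s=1}^{n} (S(s-1) - S s) δ^s) /
     (Σ_{s=1}^{n-1} (Σ_{r=0}^{s-1} δ^r)(S(s-1) - S s) + (Σ_{r=0}^{n} δ^r) S(n-1))`. -/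
theorem tip_fair_premium
    {Ω : Type*} [MeasurableSpace Ω] (μ : Measure Ω) [IsProbabilityMeasure μ]
    (T : Ω → ℕ) (hTmeas : Measurable T) (hT1 : ∀ᵐ ω ∂μ, 1 ≤ T ω)
    (δ : ℝ) (hδ0 : 0 < δ) (hδ1 : δ < 1) (n : ℕ) (hn : 2 ≤ n)
    (S : ℕ → ℝ) (hS : ∀ t, S t = (μ {ω | t < T ω}).toReal)
    (PVDB : Ω → ℝ) (hPVDB : ∀ ω, PVDB ω = if T ω ≤ n then δ ^ T ω else 0)
    (PVUP : Ω → ℝ)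
    (hPVUP : ∀ ω, PVUP ω =
      if T ω ≤ n - 1 then ∑ r ∈ Finset.range (T ω), δ ^ r
      else ∑ r ∈ Finset.range (n + 1), δ ^ r)
    (p : ℝ)
    (hequiv : ∫ ω, PVDB ω ∂μ = p * ∫ ω, PVUP ω ∂μ)
    (hpos : 0 < ∫ ω, PVUP ω ∂μ) :
    p = (∑ s ∈ Finset.Icc 1 n, (S (s - 1) - S s) * δ ^ s)
        / (∑ s ∈ Finset.Icc 1 (n - 1),
              (∑ r ∈ Finset.range s, δ ^ r) * (S (s - 1) - S s)
           + (∑ r ∈ Finset.range (n + 1), δ ^ r) * S (n - 1)) :=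
  tip_fair_premium_general μ T hTmeas hT1 δ n S hS PVDB hPVDB PVUP hPVUP p hequiv hpos
end
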